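/- arXiv:1708.06960 — 3 statements merged into one kernel-verified Lean document; each statement's English description precedes it below -/
import Mathlib

section
/- Let (X,d) be a metric space with ternary operator μ satisfying the control condition d(μ(a,b,c),μ(a',b',c')) ≤ ρ(d(a,a')+d(b,b')+d(c,c')), let (Π,m) be a median algebra, and let σ : Π → X be an L-quasi-morphism (i.e. d(σ(m(x,y,z)), μ(σx,σy,σz)) ≤ L for all x,y,z). Then for each n there is a constant H_n(L) (given recursively by H_1=0, H_2=L, H_n = ρ(H_{n-1})+L) such that for all x1,...,xn,b ∈ Π: d(σ(m(x1,...,xn;b)), μ(σ(x1),...,σ(xn);σ(b))) ≤ H_n(L), where the iterated medians are defined by m(x1,...,x_{k+1};b)=m(m(x1,...,xk;b),x_{k+1},b) and likewise for μ. -/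
/-- Iterated (coarse) median: `iterMed m b x₁ [x₂,…,x_k] = m(x₁,…,x_k; b)`. -/
def iterMed {X : Type*} (m : X → X → X → X) (b : X) (x : X) (l : List X) : X :=
  l.foldl (fun acc y => m acc y b) x

/-- `Hn ρ L k` is the constant `H_{k+1}(L)` of the paper: `H₁ = 0`, `H₂ = L`,
`H_n = ρ(H_{n-1}) + L`. -/
def Hn (ρ : ℝ → ℝ) (L : ℝ) : ℕ → ℝ
  | 0 => 0
  | 1 => L
  | (k + 2) => ρ (Hn ρ L (k + 1)) + L

/-- If `σ : Π → X` is an `L`-quasi-morphism from a median algebra to a metric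
space with ternary operator `μ` controlled by `ρ`, then
`d(σ(m(x₁,…,x_n;b)), μ(σx₁,…,σx_n;σb)) ≤ H_n(L)`. The points `x₁,…,x_n` are
given as a head `x1` and a tail list `l`, so `n = l.length + 1`. -/
theorem stmt6 {P X : Type*} [MetricSpace X]
    (m : P → P → P → P)
    (M1 : ∀ a b, m a a b = a)
    (M2a : ∀ a b c, m a b c = m b a c)
    (M2b : ∀ a b c, m a b c = m a c b)
    (M3 : ∀ a b c d, m (m a b c) b d = m a b (m c b d))
    (μ : X → X → X → X) (ρ : ℝ → ℝ) (hρ : Monotone ρ)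
    (C1 : ∀ a b c a' b' c' : X,
      dist (μ a b c) (μ a' b' c') ≤ ρ (dist a a' + dist b b' + dist c c'))
    (σ : P → X) (L : ℝ)
    (hσ : ∀ x y z, dist (σ (m x y z)) (μ (σ x) (σ y) (σ z)) ≤ L) :
    ∀ (x1 b : P) (l : List P),
      dist (σ (iterMed m b x1 l)) (iterMed μ (σ b) (σ x1) (l.map σ)) ≤
        Hn ρ L l.length := by
  intro x1 b l
  induction l using List.reverseRecOn with
  | nil => simp [iterMed, Hn]
  | append_singleton l y ih =>
    match l, ih with
    | [], _ =>
      simpa [iterMed, Hn] using hσ x1 y b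
    | z :: l', ih =>
      have hA : iterMed m b x1 ((z :: l') ++ [y]) =
          m (iterMed m b x1 (z :: l')) y b := by
        simp [iterMed, List.foldl_append]
      have hB : iterMed μ (σ b) (σ x1) (((z :: l') ++ [y]).map σ) =
          μ (iterMed μ (σ b) (σ x1) ((z :: l').map σ)) (σ y) (σ b) := by
        simp [iterMed, List.foldl_append]
      rw [hA, hB]
      have h1 := hσ (iterMed m b x1 (z :: l')) y b
      have h2 := C1 (σ (iterMed m b x1 (z :: l'))) (σ y) (σ b)
        (iterMed μ (σ b) (σ x1) ((z :: l').map σ)) (σ y) (σ b)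
      simp only [dist_self, add_zero] at h2
      have h3 : ρ (dist (σ (iterMed m b x1 (z :: l')))
          (iterMed μ (σ b) (σ x1) ((z :: l').map σ))) ≤ ρ (Hn ρ L (z :: l').length) :=
        hρ ih
      have hlen : ((z :: l') ++ [y]).length = l'.length + 2 := by simp
      rw [hlen]
      show _ ≤ ρ (Hn ρ L (l'.length + 1)) + L
      have htri := dist_triangle (σ (m (iterMed m b x1 (z :: l')) y b))
        (μ (σ (iterMed m b x1 (z :: l'))) (σ y) (σ b))
        (μ (iterMed μ (σ b) (σ x1) ((z :: l').map σ)) (σ y) (σ b))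
      have h4 := le_trans h2 h3
      simp only [List.length_cons] at h4
      linarith
end

section
/- Let (X,d,μ) be a metric space with ternary operation satisfying (M1), (M2), the control d(μ(a,b,c),μ(a',b,c)) ≤ ρ(d(a,a')), and the coarse five point condition with constant κ5. Let λ ≥ 0 and a,b ∈ X. If x lies in the λ-neighbourhood of the interval [a,b] = {μ(a,z,b) : z ∈ X}, then d(μ(a,b,x), x) ≤ ρ(λ) + λ + κ5. -/
/-- If `x` lies in the `λ`-neighbourhood of the interval
`[a,b] = {μ(a,z,b) : z ∈ X}`, then `d(μ(a,b,x), x) ≤ ρ(λ) + λ + κ₅`. -/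
theorem stmt10 {X : Type*} [MetricSpace X] (μ : X → X → X → X)
    (ρ : ℝ → ℝ) (κ5 : ℝ) (hρ : Monotone ρ)
    (M1 : ∀ a b, μ a a b = a)
    (M2a : ∀ a b c, μ a b c = μ b a c)
    (M2b : ∀ a b c, μ a b c = μ a c b)
    (C1 : ∀ a a' b c : X, dist (μ a b c) (μ a' b c) ≤ ρ (dist a a'))
    (five : ∀ x y z v w : X,
      dist (μ x y (μ z v w)) (μ (μ x y z) (μ x y v) w) ≤ κ5) :
    ∀ (lam : ℝ), 0 ≤ lam → ∀ a b x : X,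
      (∃ z, dist x (μ a z b) ≤ lam) →
      dist (μ a b x) x ≤ ρ lam + lam + κ5 := by
  intro lam hlam a b x ⟨z, hz⟩
  set p := μ a z b with hp
  have haba : μ a b a = a := by rw [M2b, M1]
  have habb : μ a b b = b := by rw [M2a, M2b, M1]
  have hpz : p = μ a b z := by rw [hp, M2b]
  -- five point with (a,b,a,b,z)
  have h5 : dist (μ a b p) p ≤ κ5 := by
    have := five a b a b z
    rwa [haba, habb, ← hpz] at this
  have h1 : dist (μ a b x) (μ a b p) ≤ ρ lam := by
    have e1 : μ a b x = μ x b a := by rw [M2a, M2b, M2a]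
    have e2 : μ a b p = μ p b a := by rw [M2a, M2b, M2a]
    rw [e1, e2]
    exact (C1 x p b a).trans (hρ hz)
  calc dist (μ a b x) x ≤ dist (μ a b x) (μ a b p) + dist (μ a b p) p + dist p x :=
        dist_triangle4 _ _ _ _
    _ ≤ ρ lam + κ5 + lam := by
        have : dist p x ≤ lam := by rw [dist_comm]; exact hz
        gcongr
    _ = ρ lam + lam + κ5 := by ring
end

section
/- Let (X,d,μ) be a coarse median space of rank at most n (condition (2) of the rank characterization): for every λ > 0 there is C(λ) such that whenever e_1,...,e_{n+1} ∈ [a,b] satisfy d(μ(e_i,a,e_j), a) ≤ λ for all i ≠ j, some e_i satisfies d(e_i, a) ≤ C(λ). Then for every L > 0 there is a constant C'(L) such that for any L-quasi-morphism σ from the median (n+1)-cube I^{n+1} = (ℤ/2)^{n+1} (with coordinatewise majority vote median) to (X,μ), there exist adjacent vertices x,y ∈ I^{n+1} (differing in exactly one coordinate) with d(σ(x), σ(y)) ≤ C'(L). -/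
/-- Majority vote on `Bool`. -/
def majority (a b c : Bool) : Bool := (a && b) || (b && c) || (a && c)

/-- The median `n`-cube: coordinatewise majority vote on `Fin n → Bool`. -/
def cubeMed (n : ℕ) :
    (Fin n → Bool) → (Fin n → Bool) → (Fin n → Bool) → (Fin n → Bool) :=
  fun f g h i => majority (f i) (g i) (h i)

/-- Rank characterisation (2) ⇒ (3): if whenever `e₁,…,e_{n+1} ∈ [a,b]` are
pairwise "orthogonal at `a`" up to `λ` one of them is `C(λ)`-close to `a`,
then for every `L > 0` there is `C'(L)` such that every `L`-quasi-morphism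
`σ` from the median `(n+1)`-cube to `X` collapses some pair of adjacent
vertices to distance at most `C'(L)`. -/
theorem stmt19 {X : Type*} [MetricSpace X] (μ : X → X → X → X)
    (ρ : ℝ → ℝ) (κ5 : ℝ) (n : ℕ) (hρ : Monotone ρ)
    (M1 : ∀ a b, μ a a b = a)
    (M2a : ∀ a b c, μ a b c = μ b a c)
    (M2b : ∀ a b c, μ a b c = μ a c b)
    (C1 : ∀ a a' b c : X, dist (μ a b c) (μ a' b c) ≤ ρ (dist a a'))
    (five : ∀ x y z v w : X,
      dist (μ x y (μ z v w)) (μ (μ x y z) (μ x y v) w) ≤ κ5)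
    (hrank : ∀ lam : ℝ, 0 < lam → ∃ C : ℝ, ∀ a b : X, ∀ e : Fin (n + 1) → X,
      (∀ i, ∃ w, e i = μ a w b) →
      (∀ i j, i ≠ j → dist (μ (e i) a (e j)) a ≤ lam) →
      ∃ i, dist (e i) a ≤ C) :
    ∀ L : ℝ, 0 < L → ∃ C' : ℝ, ∀ σ : (Fin (n + 1) → Bool) → X,
      (∀ u v w, dist (σ (cubeMed (n + 1) u v w)) (μ (σ u) (σ v) (σ w)) ≤ L) →
      ∃ x y : Fin (n + 1) → Bool,
        (∃ i, x i ≠ y i ∧ ∀ j, j ≠ i → x j = y j) ∧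
        dist (σ x) (σ y) ≤ C' := by
  intro L hL
  obtain ⟨C, hC⟩ := hrank (max (2 * ρ L + L) 1) (lt_max_of_lt_right one_pos)
  refine ⟨C + L, ?_⟩
  intro σ hσ
  -- the vertices of the cube we use
  set z : Fin (n + 1) → Bool := fun _ => false with hz
  set o : Fin (n + 1) → Bool := fun _ => true with ho
  set eb : Fin (n + 1) → (Fin (n + 1) → Bool) := fun i j => decide (j = i) with heb
  set e : Fin (n + 1) → X := fun i => μ (σ z) (σ (eb i)) (σ o) with he
  -- full symmetry of μ
  have msym : ∀ x a y : X, μ x a y = μ y a x := by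
    intro x a y
    rw [M2a, M2b, ← M2a]
  -- ρ L is nonnegative
  have hρ0 : 0 ≤ ρ L := by
    have h0 := C1 (σ z) (σ z) (σ z) (σ z)
    simp only [dist_self] at h0
    exact h0.trans (hρ hL.le)
  -- e i is L-close to σ (eb i)
  have key1 : ∀ i, dist (σ (eb i)) (e i) ≤ L := by
    intro i
    have h := hσ z (eb i) o
    have hm : cubeMed (n + 1) z (eb i) o = eb i := by
      funext k
      simp [cubeMed, majority, hz, ho]
    rwa [hm] at h
  -- orthogonality at σ z
  have horth : ∀ i j, i ≠ j →
      dist (μ (e i) (σ z) (e j)) (σ z) ≤ max (2 * ρ L + L) 1 := by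
    intro i j hij
    have h1 : dist (μ (e i) (σ z) (e j)) (μ (σ (eb i)) (σ z) (e j)) ≤ ρ L := by
      have := C1 (e i) (σ (eb i)) (σ z) (e j)
      calc dist (μ (e i) (σ z) (e j)) (μ (σ (eb i)) (σ z) (e j))
          ≤ ρ (dist (e i) (σ (eb i))) := this
        _ ≤ ρ L := hρ (by rw [dist_comm]; exact key1 i)
    have h2 : dist (μ (σ (eb i)) (σ z) (e j)) (μ (σ (eb i)) (σ z) (σ (eb j))) ≤ ρ L := by
      rw [msym (σ (eb i)) (σ z) (e j), msym (σ (eb i)) (σ z) (σ (eb j))]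
      calc dist (μ (e j) (σ z) (σ (eb i))) (μ (σ (eb j)) (σ z) (σ (eb i)))
          ≤ ρ (dist (e j) (σ (eb j))) := C1 _ _ _ _
        _ ≤ ρ L := hρ (by rw [dist_comm]; exact key1 j)
    have h3 : dist (μ (σ (eb i)) (σ z) (σ (eb j))) (σ z) ≤ L := by
      have h := hσ (eb i) z (eb j)
      have hm : cubeMed (n + 1) (eb i) z (eb j) = z := by
        funext k
        simp only [cubeMed, majority, hz, heb, Bool.and_false, Bool.false_and,
          Bool.or_false, Bool.false_or]
        simp only [Bool.and_eq_false_iff, decide_eq_false_iff_not]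
        by_cases hk : k = i
        · right; subst hk; exact hij
        · left; exact hk
      rw [hm] at h
      rw [dist_comm]
      exact h
    calc dist (μ (e i) (σ z) (e j)) (σ z)
        ≤ dist (μ (e i) (σ z) (e j)) (μ (σ (eb i)) (σ z) (e j)) +
          dist (μ (σ (eb i)) (σ z) (e j)) (μ (σ (eb i)) (σ z) (σ (eb j))) +
          dist (μ (σ (eb i)) (σ z) (σ (eb j))) (σ z) := dist_triangle4 _ _ _ _
      _ ≤ ρ L + ρ L + L := by linarith
      _ = 2 * ρ L + L := by ring
      _ ≤ max (2 * ρ L + L) 1 := le_max_left _ _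
  obtain ⟨i, hi⟩ := hC (σ z) (σ o) e (fun i => ⟨σ (eb i), rfl⟩) horth
  refine ⟨eb i, z, ⟨i, ?_, ?_⟩, ?_⟩
  · simp [heb, hz]
  · intro j hj
    simp [heb, hz, hj]
  · calc dist (σ (eb i)) (σ z)
        ≤ dist (σ (eb i)) (e i) + dist (e i) (σ z) := dist_triangle _ _ _
      _ ≤ L + C := add_le_add (key1 i) hi
      _ = C + L := by ring
end
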